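/- arXiv:2009.07770 — 4 statements merged into one kernel-verified Lean document; each statement's English description precedes it below -/
import Mathlib

section
/- Let c, k ≥ 1 and v ≥ 1 be natural numbers, let v₀, v₁, ..., v_k be vectors in ℕ^c with ‖v_j‖₁ ≤ v for all 0 ≤ j ≤ k and ‖v_j‖₁ ≥ 1 for all 1 ≤ j ≤ k. Let a₁, ..., a_k ∈ ℕ and set h = v₀ + Σ_{j=1}^{k} a_j v_j and n = ‖h‖₁. Let n₀ ≤ n be a positive natural number and for each j let a'_j be a nearest integer to a_j·n₀/n (so |a'_j − a_j·n₀/n| ≤ 1/2). Set h' = v₀ + Σ_{j=1}^{k} a'_j v_j. Then ‖h'‖₁ ≥ n₀ − (k+1)·v. -/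
/-!
Writing `N j = ‖V j‖₁`, both norms are affine in the coefficients:
`‖h‖₁ = ‖v₀‖₁ + ∑ a j * N j` and likewise for `h'`. Rounding loses at most `N j / 2 ≤ v / 2`
per coefficient, so with `r = n₀ / n ≤ 1`,
`‖h'‖₁ ≥ ‖v₀‖₁ + r (n - ‖v₀‖₁) - k v / 2 = n₀ + (1 - r) ‖v₀‖₁ - k v / 2 ≥ n₀ - k v / 2`.
-/

open Finset

lemma sum_add_sum_mul_eq {R ι κ : Type*} [CommSemiring R] [Fintype ι] [Fintype κ]
    (x : ι → R) (V : κ → ι → R) (b : κ → R) :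
    ∑ i, (x i + ∑ j, b j * V j i) = ∑ i, x i + ∑ j, b j * ∑ i, V j i := by
  rw [sum_add_distrib, sum_comm]
  simp only [mul_sum]

lemma Nat.cast_mul_div_cast_of_le {K : Type*} [Semifield K] [CharZero K] {m n : ℕ}
    (h : m ≤ n) : (n : K) * (m / n) = m := by
  rcases n.eq_zero_or_pos with rfl | hn
  · simp [Nat.le_zero.mp h]
  · exact mul_div_cancel₀ _ (Nat.cast_ne_zero.mpr hn.ne')

lemma sub_card_mul_div_two_le_sum_mul_of_abs_sub_le_half {K κ : Type*} [Field K] [LinearOrder K]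
    [IsStrictOrderedRing K] [Fintype κ] (x x' N : κ → K) (r v : K)
    (hx : ∀ j, |x' j - x j * r| ≤ 1 / 2) (hN₀ : ∀ j, 0 ≤ N j) (hN : ∀ j, N j ≤ v) :
    r * ∑ j, x j * N j - Fintype.card κ * v / 2 ≤ ∑ j, x' j * N j := by
  have hterm : ∀ j, x j * r * N j - v / 2 ≤ x' j * N j := fun j => by
    have hround : x j * r - 1 / 2 ≤ x' j := by linarith [(abs_le.mp (hx j)).1]
    linarith [mul_le_mul_of_nonneg_right hround (hN₀ j), hN j]
  calc r * ∑ j, x j * N j - Fintype.card κ * v / 2 = ∑ j, (x j * r * N j - v / 2) := by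
        rw [sum_sub_distrib, mul_sum, sum_const, card_univ, nsmul_eq_mul]
        congr 1
        · exact sum_congr rfl fun j _ => by ring
        · ring
    _ ≤ ∑ j, x' j * N j := sum_le_sum fun j _ => hterm j

theorem rounded_histogram_norm_lower_bound_general
    (c k v : ℕ)
    (v0 : Fin c → ℕ) (V : Fin k → Fin c → ℕ)
    (hV : ∀ j, ∑ i, V j i ≤ v)
    (a : Fin k → ℕ) (n : ℕ) (hn : n = ∑ i, (v0 i + ∑ j, a j * V j i))
    (n0 : ℕ) (hn0 : n0 ≤ n)
    (a' : Fin k → ℕ) (ha' : ∀ j, |(a' j : ℚ) - (a j : ℚ) * n0 / n| ≤ 1 / 2) :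
    (n0 : ℚ) - (k + 1) * v ≤ ((∑ i, (v0 i + ∑ j, a' j * V j i) : ℕ) : ℚ) := by
  set r : ℚ := n0 / n
  set S₀ : ℚ := ∑ i, (v0 i : ℚ)
  have hn' : (n : ℚ) = S₀ + ∑ j, (a j : ℚ) * ∑ i, (V j i : ℚ) := by
    rw [hn, sum_add_sum_mul_eq]; push_cast; rfl
  have hround := sub_card_mul_div_two_le_sum_mul_of_abs_sub_le_half
    (fun j => (a j : ℚ)) (fun j => (a' j : ℚ)) (fun j => ∑ i, (V j i : ℚ)) r v
    (fun j => by simpa only [mul_div_assoc] using ha' j) (fun _ => by positivity)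
    (fun j => by exact_mod_cast hV j)
  have hscaled : r * ∑ j, (a j : ℚ) * ∑ i, (V j i : ℚ) = n0 - r * S₀ := by
    linear_combination (-r) * hn' + Nat.cast_mul_div_cast_of_le (K := ℚ) hn0
  have hrS₀ : r * S₀ ≤ S₀ := mul_le_of_le_one_left (by positivity)
    (div_le_one_of_le₀ (by exact_mod_cast hn0) (by positivity))
  rw [sum_add_sum_mul_eq]
  push_cast
  simp only [Fintype.card_fin] at hround
  have hkv : (0 : ℚ) ≤ k * v := by positivity
  linarith

/-- Rounding coefficients of a linear combination down to target size `n₀`: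
lower bound `‖h'‖₁ ≥ n₀ - (k+1)·v` on the L1 norm of the rounded histogram. -/
theorem rounded_histogram_norm_lower_bound
    (c k v : ℕ) (hc : 1 ≤ c) (hk : 1 ≤ k) (hv : 1 ≤ v)
    (v0 : Fin c → ℕ) (V : Fin k → Fin c → ℕ)
    (hv0 : ∑ i, v0 i ≤ v) (hV : ∀ j, ∑ i, V j i ≤ v) (hV1 : ∀ j, 1 ≤ ∑ i, V j i)
    (a : Fin k → ℕ) (n : ℕ) (hn : n = ∑ i, (v0 i + ∑ j, a j * V j i))
    (n0 : ℕ) (hn0pos : 0 < n0) (hn0 : n0 ≤ n)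
    (a' : Fin k → ℕ) (ha' : ∀ j, |(a' j : ℚ) - (a j : ℚ) * n0 / n| ≤ 1 / 2) :
    (n0 : ℚ) - (k + 1) * v ≤ ((∑ i, (v0 i + ∑ j, a' j * V j i) : ℕ) : ℚ) :=
  rounded_histogram_norm_lower_bound_general c k v v0 V hV a n hn n0 hn0 a' ha'
end

section
/- Let c, k ≥ 1 and v ≥ 1 be natural numbers, and let v₀, v₁, ..., v_k ∈ ℕ^c satisfy ‖v_j‖₁ ≤ v for all 0 ≤ j ≤ k and ‖v_j‖₁ ≥ 1 for 1 ≤ j ≤ k. Let a₁, ..., a_k ∈ ℕ, h = v₀ + Σ_j a_j v_j, n = ‖h‖₁. Let n₀ be a natural number with (k+1)v < n₀ ≤ n, let a'_j be the nearest integer to a_j·n₀/n for each j, and set h' = v₀ + Σ_j a'_j v_j with n' = ‖h'‖₁. Then for every coordinate index i, |h[i]/n − h'[i]/n'| ≤ (k+1)v·(2(k+1)v + 1)/(n₀ − (k+1)v). -/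
/-!
Scaling `h` by `r = n₀ / n` gives a vector `r • h` of total mass exactly `n₀`. Rounding each
`r a_j` to `a'_j` moves coordinate `i` of `r • h` by at most `v₀[i] + ½ ∑_j v_j[i]`, and these
per-coordinate errors add up to at most `(k + 1) v`. An ℓ¹-perturbation of size `K` of a vector
of mass `M > K` changes its normalization by at most `2K / M` in every coordinate, and `2K / n₀`
is below the stated bound.
-/

open Finset

variable {𝕜 : Type*} [Field 𝕜] [LinearOrder 𝕜] [IsStrictOrderedRing 𝕜]

theorem abs_div_sub_div_le {x y m m' K : 𝕜} (hxy : |x - y| ≤ K) (hmm' : |m - m'| ≤ K)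
    (hy : 0 ≤ y) (hym' : y ≤ m') (hm : 0 < m) (hm' : 0 < m') :
    |x / m - y / m'| ≤ 2 * K / m := by
  have hym'_abs : |y / m'| ≤ 1 := by
    rw [abs_of_nonneg (div_nonneg hy hm'.le)]
    exact (div_le_one hm').2 hym'
  have h_eq : x / m - y / m' = ((x - y) + y / m' * (m' - m)) / m := by
    field_simp
    ring
  rw [h_eq, abs_div, abs_of_pos hm]
  gcongr
  calc |(x - y) + y / m' * (m' - m)| ≤ |x - y| + |y / m'| * |m' - m| := by
        rw [← abs_mul]; exact abs_add_le _ _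
    _ ≤ K + 1 * K := by
        rw [abs_sub_comm m']
        gcongr
    _ = 2 * K := by ring

theorem abs_div_sum_sub_div_sum_le {ι : Type*} [Fintype ι] {x y E : ι → 𝕜} {K : 𝕜}
    (hy : 0 ≤ y) (hxy : ∀ i, |x i - y i| ≤ E i) (hE : ∑ i, E i ≤ K) (hK : K < ∑ i, x i)
    (i : ι) : |x i / ∑ j, x j - y i / ∑ j, y j| ≤ 2 * K / ∑ j, x j := by
  have hE_nonneg : ∀ j, 0 ≤ E j := fun j => (abs_nonneg _).trans (hxy j)
  have h_mass : |∑ j, x j - ∑ j, y j| ≤ K :=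
    calc |∑ j, x j - ∑ j, y j| = |∑ j, (x j - y j)| := by rw [sum_sub_distrib]
      _ ≤ ∑ j, |x j - y j| := abs_sum_le_sum_abs _ _
      _ ≤ ∑ j, E j := sum_le_sum fun j _ => hxy j
      _ ≤ K := hE
  have hK_nonneg : 0 ≤ K := (sum_nonneg fun j _ => hE_nonneg j).trans hE
  have hy_mass_pos : 0 < ∑ j, y j := by linarith [(abs_le.mp h_mass).2]
  exact abs_div_sub_div_le
    ((hxy i).trans ((single_le_sum (fun j _ => hE_nonneg j) (mem_univ i)).trans hE))
    h_mass (hy i) (single_le_sum (fun j _ => hy j) (mem_univ i)) (by linarith) hy_mass_pos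

theorem two_mul_div_le_mul_two_mul_add_one_div_sub {K : ℕ} {M : 𝕜} (hKM : (K : 𝕜) < M) :
    2 * (K : 𝕜) / M ≤ K * (2 * K + 1) / (M - K) := by
  have h_num : 2 * (K : 𝕜) ≤ K * (2 * K + 1) := by
    exact_mod_cast (by nlinarith [Nat.le_mul_self K] : 2 * K ≤ K * (2 * K + 1))
  have h_gap : 0 < M - K := sub_pos.2 hKM
  calc 2 * (K : 𝕜) / M ≤ 2 * K / (M - K) := by
        gcongr
        linarith [(Nat.cast_nonneg K : (0 : 𝕜) ≤ K)]
    _ ≤ K * (2 * K + 1) / (M - K) := div_le_div_of_nonneg_right h_num h_gap.le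

def histogram {ι J : Type*} [Fintype J] (v0 : ι → ℕ) (V : J → ι → ℕ) (a : J → ℕ) :
    ι → ℕ :=
  fun i => v0 i + ∑ j, a j * V j i

section Histogram

variable {ι J : Type*} [Fintype J] (v0 : ι → ℕ) (V : J → ι → ℕ)

theorem abs_histogram_sub_mul_le {a a' : J → ℕ} {r : 𝕜} (hr0 : 0 ≤ r) (hr1 : r ≤ 1)
    (ha' : ∀ j, |(a' j : 𝕜) - r * a j| ≤ 1 / 2) (i : ι) :
    |(histogram v0 V a' i : 𝕜) - r * histogram v0 V a i|
      ≤ v0 i + (∑ j, V j i : 𝕜) / 2 := by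
  have h_eq : (histogram v0 V a' i : 𝕜) - r * histogram v0 V a i
      = (1 - r) * v0 i + ∑ j, ((a' j : 𝕜) - r * a j) * V j i := by
    simp only [histogram, Nat.cast_add, Nat.cast_sum, Nat.cast_mul, sub_mul, sum_sub_distrib,
      mul_add, mul_sum, mul_assoc]
    ring
  have h_rounding : |∑ j, ((a' j : 𝕜) - r * a j) * V j i| ≤ (∑ j, V j i : 𝕜) / 2 :=
    calc |∑ j, ((a' j : 𝕜) - r * a j) * V j i|
          ≤ ∑ j, |(a' j : 𝕜) - r * a j| * V j i := by
          simpa only [abs_mul, Nat.abs_cast] using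
            abs_sum_le_sum_abs (fun j => ((a' j : 𝕜) - r * a j) * V j i) univ
      _ ≤ ∑ j, 1 / 2 * (V j i : 𝕜) := sum_le_sum fun j _ => by gcongr; exact ha' j
      _ = (∑ j, V j i : 𝕜) / 2 := by rw [← mul_sum]; ring
  rw [h_eq]
  calc |(1 - r) * v0 i + ∑ j, ((a' j : 𝕜) - r * a j) * V j i|
      ≤ |(1 - r) * (v0 i : 𝕜)| + |∑ j, ((a' j : 𝕜) - r * a j) * V j i| := abs_add_le _ _
    _ ≤ v0 i + (∑ j, V j i : 𝕜) / 2 := by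
        rw [abs_of_nonneg (mul_nonneg (sub_nonneg.2 hr1) (Nat.cast_nonneg _))]
        exact add_le_add (mul_le_of_le_one_left (Nat.cast_nonneg _) (by linarith))
          h_rounding

variable [Fintype ι] {v0 V}

theorem sum_histogram_error_le {v : ℕ} (hv0 : ∑ i, v0 i ≤ v) (hV : ∀ j, ∑ i, V j i ≤ v) :
    ∑ i, ((v0 i : 𝕜) + (∑ j, V j i : 𝕜) / 2) ≤ (Fintype.card J + 1) * v := by
  have h_base : ∑ i, (v0 i : 𝕜) ≤ v := by exact_mod_cast hv0
  have h_steps : ∑ i, ∑ j, (V j i : 𝕜) ≤ Fintype.card J * v := by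
    rw [sum_comm]
    calc ∑ j, ∑ i, (V j i : 𝕜) ≤ ∑ _j : J, (v : 𝕜) :=
          sum_le_sum fun j _ => by exact_mod_cast hV j
      _ = Fintype.card J * v := by simp
  have : (0 : 𝕜) ≤ Fintype.card J * v := by positivity
  rw [sum_add_distrib, ← sum_div]
  linarith

end Histogram

theorem rounded_histogram_distribution_bound_general
    (c k v : ℕ)
    (v0 : Fin c → ℕ) (V : Fin k → Fin c → ℕ)
    (hv0 : ∑ i, v0 i ≤ v) (hV : ∀ j, ∑ i, V j i ≤ v)
    (a : Fin k → ℕ) (h : Fin c → ℕ) (hh : h = fun i => v0 i + ∑ j, a j * V j i)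
    (n : ℕ) (hn : n = ∑ i, h i)
    (n0 : ℕ) (hn0lb : (k + 1) * v < n0) (hn0 : n0 ≤ n)
    (a' : Fin k → ℕ) (ha' : ∀ j, |(a' j : ℚ) - (a j : ℚ) * n0 / n| ≤ 1 / 2)
    (h' : Fin c → ℕ) (hh' : h' = fun i => v0 i + ∑ j, a' j * V j i)
    (n' : ℕ) (hn' : n' = ∑ i, h' i) :
    ∀ i : Fin c, |(h i : ℚ) / n - (h' i : ℚ) / n'| ≤
      ((k + 1) * v : ℚ) * (2 * ((k + 1) * v) + 1) / (n0 - (k + 1) * v) := by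
  intro i
  have hK : ((k : ℚ) + 1) * v < n0 := by exact_mod_cast hn0lb
  have hK_nonneg : (0 : ℚ) ≤ (k + 1) * v := by positivity
  have hn0_pos : (0 : ℚ) < n0 := by linarith
  have hn_pos : (0 : ℚ) < n := by linarith [(Nat.cast_le (α := ℚ)).2 hn0]
  set r : ℚ := n0 / n
  have h_mass : ∑ j, r * h j = n0 := by
    rw [← mul_sum, ← Nat.cast_sum, ← hn, div_mul_cancel₀ _ hn_pos.ne']
  have h_error : ∀ j, |r * h j - h' j| ≤ v0 j + (∑ l, V l j : ℚ) / 2 := fun j => by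
    rw [abs_sub_comm, hh, hh']
    refine abs_histogram_sub_mul_le v0 V (by positivity)
      (div_le_one_of_le₀ (by exact_mod_cast hn0) hn_pos.le) (fun l => ?_) j
    simpa only [r, div_mul_eq_mul_div, mul_comm] using ha' l
  have h_budget := sum_histogram_error_le (𝕜 := ℚ) hv0 hV
  rw [Fintype.card_fin] at h_budget
  have h_normalized := abs_div_sum_sub_div_sum_le (fun j => Nat.cast_nonneg (h' j)) h_error
    h_budget (h_mass ▸ hK) i
  have h_scaled : r * h i / n0 = h i / n := by
    simp only [r]
    field_simp
  rw [h_mass, ← Nat.cast_sum, ← hn', h_scaled] at h_normalized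
  have h_final := two_mul_div_le_mul_two_mul_add_one_div_sub (K := (k + 1) * v) (M := (n0 : ℚ))
    (by exact_mod_cast hn0lb)
  push_cast at h_final
  exact h_normalized.trans h_final

/-- Componentwise bound on the difference of the normalized histogram `h/n` and
the normalized rounded histogram `h'/n'`. -/
theorem rounded_histogram_distribution_bound
    (c k v : ℕ) (hc : 1 ≤ c) (hk : 1 ≤ k) (hv : 1 ≤ v)
    (v0 : Fin c → ℕ) (V : Fin k → Fin c → ℕ)
    (hv0 : ∑ i, v0 i ≤ v) (hV : ∀ j, ∑ i, V j i ≤ v) (hV1 : ∀ j, 1 ≤ ∑ i, V j i)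
    (a : Fin k → ℕ) (h : Fin c → ℕ) (hh : h = fun i => v0 i + ∑ j, a j * V j i)
    (n : ℕ) (hn : n = ∑ i, h i)
    (n0 : ℕ) (hn0lb : (k + 1) * v < n0) (hn0 : n0 ≤ n)
    (a' : Fin k → ℕ) (ha' : ∀ j, |(a' j : ℚ) - (a j : ℚ) * n0 / n| ≤ 1 / 2)
    (h' : Fin c → ℕ) (hh' : h' = fun i => v0 i + ∑ j, a' j * V j i)
    (n' : ℕ) (hn' : n' = ∑ i, h' i) :
    ∀ i : Fin c, |(h i : ℚ) / n - (h' i : ℚ) / n'| ≤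
      ((k + 1) * v : ℚ) * (2 * ((k + 1) * v) + 1) / (n0 - (k + 1) * v) :=
  rounded_histogram_distribution_bound_general c k v v0 V hv0 hV a h hh n hn n0 hn0lb hn0 a' ha' h'
    hh' n' hn'
end

section
/- Let c, k ≥ 1 and v ≥ 1 be natural numbers, and let M = { v₀ + a₁v₁ + ... + a_k v_k : a₁,...,a_k ∈ ℕ } be a linear subset of ℕ^c with ‖v_j‖₁ ≤ v for all 0 ≤ j ≤ k and ‖v_j‖₁ ≥ 1 for 1 ≤ j ≤ k. Let ε ∈ (0,1] be rational. Then for every h ∈ M with ‖h‖₁ = n > 0, there exists h₀ ∈ M with ‖h₀‖₁ > 0, ‖h₀‖₁ ≤ (k+1)v·(3c(k+1)v/ε + 2), and ‖ h/n − h₀/‖h₀‖₁ ‖₁ ≤ ε. -/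
/-!
Let `K = (k+1)v`, which bounds `∑ⱼ ‖vⱼ‖₁` over `j = 0, …, k`. If `‖h‖₁ < 3K/ε`, take `h₀ = h`.
Otherwise let `D = ⌊‖h‖₁ ε / 3K⌋ ≥ 1` and round the coefficients down:
`h₀ = v₀ + ∑ ⌊aⱼ/D⌋ vⱼ`. Coordinatewise `|h - D h₀| ≤ D ∑ⱼ vⱼ`, so `‖h₀‖₁` lies within `K`
of `‖h‖₁/D ∈ [3K/ε, 6K/ε)`; in particular `‖h₀‖₁ ≥ 2K/ε`. Normalizing at most doubles L1 errors,
`‖x/‖x‖₁ - y/‖y‖₁‖₁ ≤ 2‖x - y‖₁/‖y‖₁`, which gives distance `≤ 2K/‖h₀‖₁ ≤ ε`.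
-/

open Finset

section Normalization

variable {𝕜 ι : Type*} [Field 𝕜] [LinearOrder 𝕜] [IsStrictOrderedRing 𝕜]

theorem sum_abs_div_sum_sub_div_sum_le (s : Finset ι) {x y : ι → 𝕜}
    (hx : ∀ i ∈ s, 0 ≤ x i) (hX : 0 < ∑ i ∈ s, x i) (hY : 0 < ∑ i ∈ s, y i) :
    ∑ i ∈ s, |x i / ∑ j ∈ s, x j - y i / ∑ j ∈ s, y j|
      ≤ 2 * (∑ i ∈ s, |x i - y i|) / ∑ i ∈ s, y i := by
  set X := ∑ i ∈ s, x i
  set Y := ∑ i ∈ s, y i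
  have hXY : |Y - X| ≤ ∑ i ∈ s, |x i - y i| := by
    rw [abs_sub_comm, ← sum_sub_distrib]
    exact abs_sum_le_sum_abs _ _
  calc ∑ i ∈ s, |x i / X - y i / Y|
      ≤ ∑ i ∈ s, (x i / X * (|Y - X| / Y) + |x i - y i| / Y) := by
        refine sum_le_sum fun i hi => ?_
        have hsplit : x i / X - y i / Y = x i / X * ((Y - X) / Y) + (x i - y i) / Y := by
          field_simp
          ring
        rw [hsplit]
        refine (abs_add_le _ _).trans_eq ?_
        simp only [abs_mul, abs_div, abs_of_nonneg (hx i hi), abs_of_pos hX, abs_of_pos hY]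
    _ = (|Y - X| + ∑ i ∈ s, |x i - y i|) / Y := by
        rw [sum_add_distrib, ← sum_mul, ← sum_div, ← sum_div, div_self hX.ne', one_mul,
          add_div]
    _ ≤ 2 * (∑ i ∈ s, |x i - y i|) / Y := by
        gcongr
        linarith

end Normalization

section Rounding

variable {𝕜 ι κ : Type*} [Field 𝕜] [LinearOrder 𝕜] [IsStrictOrderedRing 𝕜]
variable [Fintype κ]

def linComb (v0 : ι → ℕ) (V : κ → ι → ℕ) (a : κ → ℕ) (i : ι) : ℕ :=
  v0 i + ∑ j, a j * V j i

variable (v0 : ι → ℕ) (V : κ → ι → ℕ) (a : κ → ℕ)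

theorem linComb_le_mul_linComb_div_add {D : ℕ} (hD : 0 < D) (i : ι) :
    linComb v0 V a i ≤ D * linComb v0 V (fun j => a j / D) i + D * linComb v0 V 1 i := by
  have hround : ∀ j, a j * V j i ≤ D * (a j / D * V j i) + D * V j i := fun j => by
    rw [← mul_assoc, ← add_mul, ← mul_add_one]
    exact Nat.mul_le_mul_right _ (Nat.lt_mul_div_succ _ hD).le
  calc linComb v0 V a i
      ≤ v0 i + ∑ j, (D * (a j / D * V j i) + D * V j i) :=
        add_le_add le_rfl (sum_le_sum fun j _ => hround j)
    _ ≤ D * linComb v0 V (fun j => a j / D) i + D * linComb v0 V 1 i := by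
        simp only [linComb, sum_add_distrib, ← mul_sum, Pi.one_apply, one_mul, mul_add]
        nlinarith

theorem mul_linComb_div_le (D : ℕ) (i : ι) :
    D * linComb v0 V (fun j => a j / D) i ≤ linComb v0 V a i + D * linComb v0 V 1 i := by
  have hround : ∀ j, D * (a j / D * V j i) ≤ a j * V j i := fun j => by
    rw [← mul_assoc]
    exact Nat.mul_le_mul_right _ (Nat.mul_div_le _ _)
  calc D * linComb v0 V (fun j => a j / D) i
      = D * v0 i + ∑ j, D * (a j / D * V j i) := by rw [linComb, mul_add, mul_sum]
    _ ≤ D * v0 i + ∑ j, a j * V j i := add_le_add le_rfl (sum_le_sum fun j _ => hround j)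
    _ ≤ linComb v0 V a i + D * linComb v0 V 1 i := by
        simp only [linComb, Pi.one_apply, one_mul, mul_add]
        omega

theorem abs_linComb_sub_mul_linComb_div_le {D : ℕ} (hD : 0 < D) (i : ι) :
    |(linComb v0 V a i : 𝕜) - D * linComb v0 V (fun j => a j / D) i|
      ≤ D * linComb v0 V 1 i := by
  rw [abs_sub_le_iff]
  constructor
  · rw [sub_le_iff_le_add']
    exact_mod_cast linComb_le_mul_linComb_div_add v0 V a hD i
  · rw [sub_le_iff_le_add']
    exact_mod_cast mul_linComb_div_le v0 V a D i

variable [Fintype ι]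

theorem sum_linComb_one_le {v : ℕ} (hv0 : ∑ i, v0 i ≤ v) (hV : ∀ j, ∑ i, V j i ≤ v) :
    ∑ i, linComb v0 V 1 i ≤ (Fintype.card κ + 1) * v := by
  calc ∑ i, linComb v0 V 1 i = ∑ i, v0 i + ∑ j, ∑ i, V j i := by
        simp only [linComb, Pi.one_apply, one_mul, sum_add_distrib, sum_comm (γ := κ)]
    _ ≤ v + ∑ _j : κ, v := add_le_add hv0 (sum_le_sum fun j _ => hV j)
    _ = (Fintype.card κ + 1) * v := by rw [sum_const, card_univ, smul_eq_mul]; ring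

theorem sum_linComb_le_mul_sum_linComb_div_add {D : ℕ} (hD : 0 < D) :
    ∑ i, linComb v0 V a i
      ≤ D * (∑ i, linComb v0 V (fun j => a j / D) i + ∑ i, linComb v0 V 1 i) := by
  rw [mul_add, mul_sum, mul_sum, ← sum_add_distrib]
  exact sum_le_sum fun i _ => linComb_le_mul_linComb_div_add v0 V a hD i

theorem mul_sum_linComb_div_le (D : ℕ) :
    D * ∑ i, linComb v0 V (fun j => a j / D) i
      ≤ ∑ i, linComb v0 V a i + D * ∑ i, linComb v0 V 1 i := by
  rw [mul_sum, mul_sum, ← sum_add_distrib]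
  exact sum_le_sum fun i _ => mul_linComb_div_le v0 V a D i

def normalizedDist (h g : ι → ℕ) : 𝕜 :=
  ∑ i, |(h i : 𝕜) / (∑ i', h i' : ℕ) - (g i : 𝕜) / (∑ i', g i' : ℕ)|

@[simp]
theorem normalizedDist_self (h : ι → ℕ) : (normalizedDist h h : 𝕜) = 0 := by
  simp only [normalizedDist, sub_self, abs_zero, sum_const_zero]

theorem normalizedDist_linComb_div_le {D : ℕ} (hD : 0 < D)
    (hn : 0 < ∑ i, linComb v0 V a i) (hm : 0 < ∑ i, linComb v0 V (fun j => a j / D) i) :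
    (normalizedDist (linComb v0 V a) (linComb v0 V fun j => a j / D) : 𝕜)
      ≤ 2 * (∑ i, linComb v0 V 1 i : ℕ) /
        (∑ i, linComb v0 V (fun j => a j / D) i : ℕ) := by
  rw [normalizedDist]
  set b : κ → ℕ := fun j => a j / D
  have hD' : (0 : 𝕜) < D := by exact_mod_cast hD
  have key := sum_abs_div_sum_sub_div_sum_le (𝕜 := 𝕜) univ
    (x := fun i => (linComb v0 V a i : 𝕜)) (y := fun i => D * (linComb v0 V b i : 𝕜))
    (fun i _ => by positivity) (by exact_mod_cast hn)
    (by rw [← mul_sum]; exact mul_pos hD' (by exact_mod_cast hm))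
  simp only [← mul_sum, mul_div_mul_left _ _ hD'.ne'] at key
  push_cast
  calc _ ≤ _ := key
    _ ≤ 2 * (D * ∑ i, (linComb v0 V 1 i : 𝕜)) / (D * ∑ i, (linComb v0 V b i : 𝕜)) := by
        gcongr
        rw [mul_sum]
        exact sum_le_sum fun i _ => abs_linComb_sub_mul_linComb_div_le v0 V a hD i
    _ = _ := by rw [mul_left_comm, mul_div_mul_left _ _ hD'.ne']

theorem exists_close_linComb_of_scale {K D : ℕ} (hK : 0 < K)
    (hW : ∑ i, linComb v0 V 1 i ≤ K) {ε : 𝕜} (hε0 : 0 < ε) (hε1 : ε ≤ 1) (hD : 0 < D)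
    (hDn : 3 * K * (D : 𝕜) ≤ (∑ i, linComb v0 V a i : ℕ) * ε)
    (hnD : ((∑ i, linComb v0 V a i : ℕ) : 𝕜) * ε < 6 * K * D) :
    ∃ b : κ → ℕ, 0 < ∑ i, linComb v0 V b i ∧
      ε * (∑ i, linComb v0 V b i : ℕ) ≤ 6 * K + ε * K ∧
      normalizedDist (linComb v0 V a) (linComb v0 V b) ≤ ε := by
  set n := ∑ i, linComb v0 V a i
  set m := ∑ i, linComb v0 V (fun j => a j / D) i
  have hnm : n ≤ D * (m + K) :=
    (sum_linComb_le_mul_sum_linComb_div_add v0 V a hD).trans (by gcongr)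
  have hmn : D * m ≤ n + D * K := (mul_sum_linComb_div_le v0 V a D).trans (by gcongr)
  have hK' : (0 : 𝕜) < K := by exact_mod_cast hK
  have hD' : (0 : 𝕜) < D := by exact_mod_cast hD
  have hnm' : (n : 𝕜) ≤ D * (m + K) := by exact_mod_cast hnm
  have hmn' : (D * m : 𝕜) ≤ n + D * K := by exact_mod_cast hmn
  have hmε : 2 * K ≤ ε * m := by
    have : 3 * K ≤ ε * (m + K) := le_of_mul_le_mul_right (by nlinarith) hD'
    nlinarith
  have hmε' : ε * m ≤ 6 * K + ε * K := le_of_mul_le_mul_right (by nlinarith) hD'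
  have hm : (0 : 𝕜) < m := pos_of_mul_pos_right (by linarith) hε0.le
  have hn : (0 : 𝕜) < n := pos_of_mul_pos_left (hDn.trans_lt' (by positivity)) hε0.le
  refine ⟨fun j => a j / D, by exact_mod_cast hm, hmε', ?_⟩
  refine (normalizedDist_linComb_div_le v0 V a hD (by exact_mod_cast hn)
    (by exact_mod_cast hm)).trans ?_
  have : ((∑ i, linComb v0 V 1 i : ℕ) : 𝕜) ≤ K := by exact_mod_cast hW
  rw [div_le_iff₀ hm]
  linarith

theorem exists_close_linComb [FloorSemiring 𝕜] {K : ℕ} (hK : 0 < K)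
    (hW : ∑ i, linComb v0 V 1 i ≤ K) {ε : 𝕜} (hε0 : 0 < ε) (hε1 : ε ≤ 1)
    (hn : 0 < ∑ i, linComb v0 V a i) :
    ∃ b : κ → ℕ, 0 < ∑ i, linComb v0 V b i ∧
      ε * (∑ i, linComb v0 V b i : ℕ) ≤ 6 * K + ε * K ∧
      normalizedDist (linComb v0 V a) (linComb v0 V b) ≤ ε := by
  have hK' : (0 : 𝕜) < K := by exact_mod_cast hK
  obtain hD | hD :=
    Nat.eq_zero_or_pos ⌊((∑ i, linComb v0 V a i : ℕ) : 𝕜) * ε / (3 * K)⌋₊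
  · refine ⟨a, hn, ?_, (normalizedDist_self _).trans_le hε0.le⟩
    rw [Nat.floor_eq_zero, div_lt_one (by positivity)] at hD
    nlinarith
  · refine exists_close_linComb_of_scale v0 V a hK hW hε0 hε1 hD ?_ ?_
    · rw [mul_comm, ← le_div_iff₀ (by positivity)]
      exact Nat.floor_le (by positivity)
    · have := Nat.div_two_lt_floor (Nat.one_le_floor_iff _ |>.mp hD)
      rw [div_div, div_lt_iff₀ (by positivity)] at this
      linarith

end Rounding

theorem small_member_with_close_distribution_general
    (c k v : ℕ) (hc : 1 ≤ c) (hk : 1 ≤ k) (hv : 1 ≤ v)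
    (v0 : Fin c → ℕ) (V : Fin k → Fin c → ℕ)
    (hv0 : ∑ i, v0 i ≤ v) (hV : ∀ j, ∑ i, V j i ≤ v)
    (ε : ℚ) (hε0 : 0 < ε) (hε1 : ε ≤ 1)
    (a : Fin k → ℕ) (h : Fin c → ℕ) (hh : h = fun i => v0 i + ∑ j, a j * V j i)
    (n : ℕ) (hn : n = ∑ i, h i) (hnpos : 0 < n) :
    ∃ b : Fin k → ℕ,
      0 < ∑ i, (v0 i + ∑ j, b j * V j i) ∧
      ((∑ i, (v0 i + ∑ j, b j * V j i) : ℕ) : ℚ) ≤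
        ((k + 1) * v : ℚ) * (3 * c * ((k + 1) * v) / ε + 2) ∧
      ∑ i, |(h i : ℚ) / n -
          ((v0 i + ∑ j, b j * V j i : ℕ) : ℚ) / ((∑ i', (v0 i' + ∑ j, b j * V j i') : ℕ) : ℚ)|
        ≤ ε := by
  obtain rfl : h = linComb v0 V a := hh
  set K := (k + 1) * v
  have hK : 2 ≤ K := Nat.mul_le_mul (Nat.succ_le_succ hk) hv
  obtain ⟨b, hm, hmK, hclose⟩ := exists_close_linComb v0 V a (K := K) (by omega)
    (by simpa using sum_linComb_one_le v0 V hv0 hV) hε0 hε1 (hn ▸ hnpos)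
  refine ⟨b, hm, ?_, hn ▸ hclose⟩
  have hKq : (K : ℚ) = (k + 1) * v := by simp only [K, Nat.cast_mul, Nat.cast_succ]
  have hcK : (6 * K : ℚ) ≤ 3 * c * K * K := by
    have : (2 : ℚ) ≤ c * K := by exact_mod_cast Nat.mul_le_mul hc hK
    nlinarith
  rw [← hKq]
  calc ((∑ i, linComb v0 V b i : ℕ) : ℚ) ≤ 6 * K / ε + K := by
        rw [div_add' _ _ _ hε0.ne', le_div_iff₀ hε0]
        linarith
    _ ≤ 3 * c * K * K / ε + 2 * K := by
        have := div_le_div_of_nonneg_right hcK hε0.le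
        linarith
    _ = K * (3 * c * K / ε + 2) := by ring

/-- Explicit quantitative version of Alon's theorem for a linear set of histograms:
every member `h` of the linear set `M = {v₀ + Σ aⱼ vⱼ}` with `‖h‖₁ = n > 0` has a
member `h₀` of `M` of small positive L1 norm whose normalization is `ε`-close in L1
distance to that of `h`. -/
theorem small_member_with_close_distribution
    (c k v : ℕ) (hc : 1 ≤ c) (hk : 1 ≤ k) (hv : 1 ≤ v)
    (v0 : Fin c → ℕ) (V : Fin k → Fin c → ℕ)
    (hv0 : ∑ i, v0 i ≤ v) (hV : ∀ j, ∑ i, V j i ≤ v) (hV1 : ∀ j, 1 ≤ ∑ i, V j i)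
    (ε : ℚ) (hε0 : 0 < ε) (hε1 : ε ≤ 1)
    (a : Fin k → ℕ) (h : Fin c → ℕ) (hh : h = fun i => v0 i + ∑ j, a j * V j i)
    (n : ℕ) (hn : n = ∑ i, h i) (hnpos : 0 < n) :
    ∃ b : Fin k → ℕ,
      0 < ∑ i, (v0 i + ∑ j, b j * V j i) ∧
      ((∑ i, (v0 i + ∑ j, b j * V j i) : ℕ) : ℚ) ≤
        ((k + 1) * v : ℚ) * (3 * c * ((k + 1) * v) / ε + 2) ∧
      ∑ i, |(h i : ℚ) / n -
          ((v0 i + ∑ j, b j * V j i : ℕ) : ℚ) / ((∑ i', (v0 i' + ∑ j, b j * V j i') : ℕ) : ℚ)|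
        ≤ ε :=
  small_member_with_close_distribution_general c k v hc hk hv v0 V hv0 hV ε hε0 hε1 a h hh n hn
    hnpos
end

section
/- Let n, n', n₀ be positive rationals with 0 < n₀ − δ ≤ n' ≤ n₀ + δ < n for some δ > 0, let a, a' ≥ 0 be rationals with a ≤ n and |a' − a·n₀/n| ≤ 1/2, and let w ≥ 0 be a rational. Then | w·(a/n − a'/n') | ≤ w·(2δ + 1)/(2(n₀ − δ)). -/
/-!
Write `q = a/n ∈ [0, 1]`. Then `q - a'/n' = (q (n' - n₀) + (q n₀ - a')) / n'`: the first summand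
of the numerator is at most `δ` since `|n' - n₀| ≤ δ`, the second at most `1/2` by the rounding,
and `n' ≥ n₀ - δ`.
-/

theorem abs_sub_div_le_of_abs_le_one {K : Type*} [Field K] [LinearOrder K] [IsStrictOrderedRing K]
    {q b m m' δ ε : K} (hq : |q| ≤ 1) (hm' : |m' - m| ≤ δ) (hb : |b - q * m| ≤ ε)
    (hpos : 0 < m - δ) (hm'_ge : m - δ ≤ m') :
    |q - b / m'| ≤ (δ + ε) / (m - δ) := by
  have hm'_pos : 0 < m' := hpos.trans_le hm'_ge
  have hsplit : q - b / m' = (q * (m' - m) + (q * m - b)) / m' := by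
    field_simp
    ring
  have hnum : |q * (m' - m) + (q * m - b)| ≤ δ + ε :=
    calc |q * (m' - m) + (q * m - b)| ≤ |q| * |m' - m| + |b - q * m| := by
          rw [← abs_mul, abs_sub_comm b]
          exact abs_add_le _ _
      _ ≤ 1 * δ + ε := by gcongr
      _ = δ + ε := by rw [one_mul]
  rw [hsplit, abs_div, abs_of_pos hm'_pos]
  exact div_le_div₀ ((abs_nonneg _).trans hnum) hnum hpos hm'_ge

theorem rounding_estimate_general
    (n n' n0 δ a a' w : ℚ)
    (h1 : 0 < n0 - δ) (h2 : n0 - δ ≤ n') (h3 : n' ≤ n0 + δ)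
    (ha0 : 0 ≤ a) (han : a ≤ n)
    (hround : |a' - a * n0 / n| ≤ 1 / 2) (hw : 0 ≤ w) :
    |w * (a / n - a' / n')| ≤ w * (2 * δ + 1) / (2 * (n0 - δ)) := by
  have hn : 0 ≤ n := ha0.trans han
  have hq : |a / n| ≤ 1 :=
    abs_le.mpr ⟨by linarith [div_nonneg ha0 hn], div_le_one_of_le₀ han hn⟩
  have hn' : |n' - n0| ≤ δ := abs_le.mpr ⟨by linarith, by linarith⟩
  rw [mul_div_right_comm] at hround
  have key := abs_sub_div_le_of_abs_le_one hq hn' hround h1 h2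
  calc |w * (a / n - a' / n')| = w * |a / n - a' / n'| := by rw [abs_mul, abs_of_nonneg hw]
    _ ≤ w * ((δ + 1 / 2) / (n0 - δ)) := by gcongr
    _ = w * (2 * δ + 1) / (2 * (n0 - δ)) := by field_simp

/-- Core rounding estimate: if `0 < n₀ - δ ≤ n' ≤ n₀ + δ < n`, `0 ≤ a ≤ n`,
`a'` is within `1/2` of `a·n₀/n`, and `w ≥ 0`, then
`|w(a/n - a'/n')| ≤ w(2δ+1)/(2(n₀-δ))`. -/
theorem rounding_estimate
    (n n' n0 δ a a' w : ℚ)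
    (hn : 0 < n) (hn' : 0 < n') (hn0 : 0 < n0) (hδ : 0 < δ)
    (h1 : 0 < n0 - δ) (h2 : n0 - δ ≤ n') (h3 : n' ≤ n0 + δ) (h4 : n0 + δ < n)
    (ha0 : 0 ≤ a) (han : a ≤ n) (ha'0 : 0 ≤ a')
    (hround : |a' - a * n0 / n| ≤ 1 / 2) (hw : 0 ≤ w) :
    |w * (a / n - a' / n')| ≤ w * (2 * δ + 1) / (2 * (n0 - δ)) :=
  rounding_estimate_general n n' n0 δ a a' w h1 h2 h3 ha0 han hround hw
end
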